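/- arXiv:2403.09103 — 2 statements merged into one kernel-verified Lean document; each statement's English description precedes it below -/
import Mathlib

section
/- With the setup below, for every homogeneous u ∈ V and every v ∈ V: Φ(C(u), v) + 2·Σ_{i=1}^N (−1)^{|X_i||u|} Φ(X_i(u), X_i^∨(v)) = −Φ(u, C(v)). (This is the computation underlying the compatibility of the affine dot with the cap in the action of the affine Frobenius Brauer category.) -/
/-!
Moving `X_i X_i^∨` across `Φ` gives `Φ(C u, v) = Σ (−1)^{|X_i|} Φ(u, X_i^∨ X_i v)`, and the
supersymmetry of `B` makes the Casimir element insensitive to the order of the dual bases: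
`Σ (−1)^{|X_i|} X_i^∨ X_i = Σ X_i X_i^∨ = C`. Moving only `X_i` across `Φ` turns each summand of
the middle term into `−Φ(u, X_i X_i^∨ v)`, so the left side is `Φ(u, C v) − 2 Φ(u, C v)`.
-/

/-- `X` is a homogeneous endomorphism of parity `p` with respect to the grading `𝒱`. -/
def homE {k V : Type*} [Field k] [AddCommGroup V] [Module k V]
    (𝒱 : ZMod 2 → Submodule k V) (p : ZMod 2) (X : Module.End k V) : Prop :=
  ∀ (i : ZMod 2), ∀ v ∈ 𝒱 i, X v ∈ 𝒱 (i + p)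

open Finset

section Signs

variable {R : Type*} [Monoid R] [HasDistribNeg R]

lemma neg_one_pow_mul_neg_one_pow_self (n : ℕ) : (-1 : R) ^ n * (-1) ^ n = 1 := by
  rw [← pow_add, ← two_mul, pow_mul, neg_one_sq, one_pow]

lemma ZMod.eq_zero_or_eq_one_of_two (a : ZMod 2) : a = 0 ∨ a = 1 := by
  decide +revert

lemma neg_one_pow_val_mul_val_self (a : ZMod 2) : (-1 : R) ^ (a.val * a.val) = (-1) ^ a.val := by
  obtain rfl | rfl := a.eq_zero_or_eq_one_of_two <;> simp [ZMod.val_one]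

lemma neg_one_pow_val_mul_val_add_mul (a b : ZMod 2) :
    (-1 : R) ^ (a.val * (b + a).val) * (-1) ^ (a.val * b.val) = (-1) ^ a.val := by
  obtain rfl | rfl := a.eq_zero_or_eq_one_of_two <;>
  obtain rfl | rfl := b.eq_zero_or_eq_one_of_two <;>
  simp [ZMod.val_one, show (1 + 1 : ZMod 2) = 0 from rfl]

end Signs

lemma eq_sum_apply_smul_of_mem_span {R M ι : Type*} [CommSemiring R] [AddCommMonoid M]
    [Module R M] [Fintype ι] [DecidableEq ι] (B : M →ₗ[R] M →ₗ[R] R) (X Xd : ι → M)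
    (hdual : ∀ i j, B (Xd i) (X j) = if i = j then 1 else 0) {Y : M}
    (hY : Y ∈ Submodule.span R (Set.range X)) : Y = ∑ j, B (Xd j) Y • X j := by
  obtain ⟨c, rfl⟩ := (Submodule.mem_span_range_iff_exists_fun R).mp hY
  refine sum_congr rfl fun j _ => ?_
  simp [hdual]

/-- Reversing the order of the factors of `Σ X_i X_i^∨`, where `X_i^∨ = Σ_j c j i • X_j`,
costs the signs `s` by which the coefficient matrix `c` fails to be symmetric. -/
lemma sum_smul_mul_eq_sum_mul {R A ι : Type*} [CommSemiring R] [Semiring A] [Algebra R A]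
    [Fintype ι] (X Xd : ι → A) (c : ι → ι → R) (s : ι → R)
    (hexp : ∀ i, Xd i = ∑ j, c j i • X j) (hc : ∀ i j, c i j = s i * c j i) :
    ∑ i, s i • (Xd i * X i) = ∑ i, X i * Xd i :=
  calc ∑ i, s i • (Xd i * X i)
      = ∑ i, ∑ j, c i j • (X j * X i) := by
        refine sum_congr rfl fun i _ => ?_
        simp only [hexp i, sum_mul, smul_sum, smul_mul_assoc, smul_smul, hc i]
    _ = ∑ j, ∑ i, c i j • (X j * X i) := sum_comm
    _ = ∑ j, X j * Xd j := by
        refine sum_congr rfl fun j _ => ?_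
        simp only [hexp j, mul_sum, mul_smul_comm]

section Graded

variable {k V : Type*} [Field k] [AddCommGroup V] [Module k V] {𝒱 : ZMod 2 → Submodule k V}

def IsSuperskew (𝒱 : ZMod 2 → Submodule k V) (Φ : V →ₗ[k] V →ₗ[k] k) (q : ZMod 2)
    (Y : Module.End k V) : Prop :=
  ∀ r : ZMod 2, ∀ u ∈ 𝒱 r, ∀ w : V, Φ (Y u) w = -((-1 : k) ^ (q.val * r.val)) * Φ u (Y w)

lemma isSuperskew_of_homogeneous [DirectSum.Decomposition 𝒱] {Φ : V →ₗ[k] V →ₗ[k] k}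
    {q : ZMod 2} {Y : Module.End k V}
    (h : ∀ r s : ZMod 2, ∀ u ∈ 𝒱 r, ∀ v ∈ 𝒱 s,
      Φ (Y u) v = -((-1 : k) ^ (q.val * r.val)) * Φ u (Y v)) :
    IsSuperskew 𝒱 Φ q Y := by
  intro r u hu w
  have hext : Φ (Y u) = -((-1 : k) ^ (q.val * r.val)) • (Φ u ∘ₗ Y) :=
    DirectSum.decompose_lhom_ext 𝒱 fun s => LinearMap.ext fun v => h r s u hu v v.2
  exact LinearMap.congr_fun hext w

namespace IsSuperskew

variable {Φ : V →ₗ[k] V →ₗ[k] k} {q r : ZMod 2} {X Y : Module.End k V} {u : V}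

lemma neg_one_pow_mul_apply (hX : IsSuperskew 𝒱 Φ q X) (hu : u ∈ 𝒱 r) (w : V) :
    (-1 : k) ^ (q.val * r.val) * Φ (X u) w = -Φ u (X w) := by
  rw [hX r u hu w, ← mul_assoc, mul_neg, neg_mul, neg_one_pow_mul_neg_one_pow_self, one_mul]

lemma apply_mul_apply (hX : IsSuperskew 𝒱 Φ q X) (hY : IsSuperskew 𝒱 Φ q Y)
    (hYhom : homE 𝒱 q Y) (hu : u ∈ 𝒱 r) (w : V) :
    Φ ((X * Y) u) w = (-1 : k) ^ q.val * Φ u ((Y * X) w) := by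
  rw [Module.End.mul_apply, hX (r + q) (Y u) (hYhom r u hu) w, hY r u hu (X w),
    Module.End.mul_apply, ← neg_one_pow_val_mul_val_add_mul q r]
  ring

end IsSuperskew

lemma apply_eq_neg_one_pow_mul_apply_swap {g : Submodule k (Module.End k V)}
    {Bf : Module.End k V →ₗ[k] Module.End k V →ₗ[k] k}
    (hB_even : ∀ (p q : ZMod 2), ∀ X ∈ g, ∀ Y ∈ g,
      homE 𝒱 p X → homE 𝒱 q Y → p ≠ q → Bf X Y = 0)
    (hB_symm : ∀ (p q : ZMod 2), ∀ X ∈ g, ∀ Y ∈ g,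
      homE 𝒱 p X → homE 𝒱 q Y → Bf X Y = (-1 : k) ^ (p.val * q.val) * Bf Y X)
    {p q : ZMod 2} {X Y : Module.End k V} (hX : X ∈ g) (hY : Y ∈ g)
    (hXp : homE 𝒱 p X) (hYq : homE 𝒱 q Y) :
    Bf X Y = (-1 : k) ^ p.val * Bf Y X := by
  by_cases hpq : p = q
  · subst hpq
    rw [hB_symm p p X hX Y hY hXp hYq, neg_one_pow_val_mul_val_self]
  · rw [hB_even p q X hX Y hY hXp hYq hpq, hB_even q p Y hY X hX hYq hXp (Ne.symm hpq), mul_zero]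

end Graded

theorem stmt11_general (k : Type*) [Field k]
    (V : Type*) [AddCommGroup V] [Module k V]
    (𝒱 : ZMod 2 → Submodule k V) [DirectSum.Decomposition 𝒱]
    (Φ : V →ₗ[k] V →ₗ[k] k)
    (g : Submodule k (Module.End k V))
    (hg_skew : ∀ Y ∈ g, ∀ p : ZMod 2, homE 𝒱 p Y →
      ∀ (i j : ZMod 2), ∀ u ∈ 𝒱 i, ∀ v ∈ 𝒱 j,
        Φ (Y u) v = -((-1 : k) ^ (p.val * i.val)) * Φ u (Y v))
    (Bf : Module.End k V →ₗ[k] Module.End k V →ₗ[k] k)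
    (hB_even : ∀ (p q : ZMod 2), ∀ X ∈ g, ∀ Y ∈ g,
      homE 𝒱 p X → homE 𝒱 q Y → p ≠ q → Bf X Y = 0)
    (hB_symm : ∀ (p q : ZMod 2), ∀ X ∈ g, ∀ Y ∈ g,
      homE 𝒱 p X → homE 𝒱 q Y →
      Bf X Y = (-1 : k) ^ (p.val * q.val) * Bf Y X)
    (N : ℕ) (X Xd : Fin N → Module.End k V) (px : Fin N → ZMod 2)
    (hXg : ∀ i, X i ∈ g) (hXdg : ∀ i, Xd i ∈ g)
    (hXhom : ∀ i, homE 𝒱 (px i) (X i))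
    (hXdhom : ∀ i, homE 𝒱 (px i) (Xd i))
    (hXspan : Submodule.span k (Set.range X) = g)
    (hdual : ∀ i j, Bf (Xd i) (X j) = if i = j then (1 : k) else 0)
    (C : Module.End k V) (hC : C = ∑ i, X i * Xd i) :
    ∀ (p : ZMod 2), ∀ u ∈ 𝒱 p, ∀ v : V,
      Φ (C u) v + 2 * ∑ i, (-1 : k) ^ ((px i).val * p.val) * Φ (X i u) (Xd i v)
        = - Φ u (C v) := by
  intro p u hu v
  have hskew : ∀ Y ∈ g, ∀ q, homE 𝒱 q Y → IsSuperskew 𝒱 Φ q Y :=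
    fun Y hY q hq => isSuperskew_of_homogeneous (hg_skew Y hY q hq)
  have hcasimir : ∑ i, (-1 : k) ^ (px i).val • (Xd i * X i) = C :=
    hC ▸ sum_smul_mul_eq_sum_mul X Xd (fun j i => Bf (Xd j) (Xd i)) _
      (fun i => eq_sum_apply_smul_of_mem_span Bf X Xd hdual (hXspan ▸ hXdg i))
      (fun i j => apply_eq_neg_one_pow_mul_apply_swap hB_even hB_symm
        (hXdg i) (hXdg j) (hXdhom i) (hXdhom j))
  have hself : Φ (C u) v = Φ u (C v) := by
    conv_lhs => rw [hC]
    conv_rhs => rw [← hcasimir]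
    simp only [LinearMap.sum_apply, map_sum, LinearMap.smul_apply, map_smul, smul_eq_mul]
    exact sum_congr rfl fun i _ => (hskew _ (hXg i) _ (hXhom i)).apply_mul_apply
      (hskew _ (hXdg i) _ (hXdhom i)) (hXdhom i) hu v
  have hmiddle : ∑ i, (-1 : k) ^ ((px i).val * p.val) * Φ (X i u) (Xd i v) = -Φ u (C v) := by
    rw [hC, LinearMap.sum_apply, map_sum, ← sum_neg_distrib]
    exact sum_congr rfl fun i _ => (hskew _ (hXg i) _ (hXhom i)).neg_one_pow_mul_apply hu _
  rw [hself, hmiddle]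
  ring

/-- With the same setup, for homogeneous `u` and all `v`:
`Φ(C u, v) + 2 Σ_i (−1)^{|X_i||u|} Φ(X_i u, X_i^∨ v) = −Φ(u, C v)`. -/
theorem stmt11 (k : Type*) [Field k] (hchar : (2 : k) ≠ 0)
    (V : Type*) [AddCommGroup V] [Module k V] [FiniteDimensional k V]
    (𝒱 : ZMod 2 → Submodule k V) [DirectSum.Decomposition 𝒱]
    (Φ : V →ₗ[k] V →ₗ[k] k)
    (g : Submodule k (Module.End k V))
    (hg_skew : ∀ Y ∈ g, ∀ p : ZMod 2, homE 𝒱 p Y →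
      ∀ (i j : ZMod 2), ∀ u ∈ 𝒱 i, ∀ v ∈ 𝒱 j,
        Φ (Y u) v = -((-1 : k) ^ (p.val * i.val)) * Φ u (Y v))
    (Bf : Module.End k V →ₗ[k] Module.End k V →ₗ[k] k)
    (hB_even : ∀ (p q : ZMod 2), ∀ X ∈ g, ∀ Y ∈ g,
      homE 𝒱 p X → homE 𝒱 q Y → p ≠ q → Bf X Y = 0)
    (hB_symm : ∀ (p q : ZMod 2), ∀ X ∈ g, ∀ Y ∈ g,
      homE 𝒱 p X → homE 𝒱 q Y →
      Bf X Y = (-1 : k) ^ (p.val * q.val) * Bf Y X)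
    (N : ℕ) (X Xd : Fin N → Module.End k V) (px : Fin N → ZMod 2)
    (hXg : ∀ i, X i ∈ g) (hXdg : ∀ i, Xd i ∈ g)
    (hXhom : ∀ i, homE 𝒱 (px i) (X i))
    (hXdhom : ∀ i, homE 𝒱 (px i) (Xd i))
    (hXli : LinearIndependent k X)
    (hXspan : Submodule.span k (Set.range X) = g)
    (hdual : ∀ i j, Bf (Xd i) (X j) = if i = j then (1 : k) else 0)
    (C : Module.End k V) (hC : C = ∑ i, X i * Xd i) :
    ∀ (p : ZMod 2), ∀ u ∈ 𝒱 p, ∀ v : V,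
      Φ (C u) v + 2 * ∑ i, (-1 : k) ^ ((px i).val * p.val) * Φ (X i u) (Xd i v)
        = - Φ u (C v) :=
  stmt11_general k V 𝒱 Φ g hg_skew Bf hB_even hB_symm N X Xd px hXg hXdg hXhom hXdhom hXspan hdual C
    hC
end

section
/- With the setup below, for all homogeneous u, v ∈ V: Σ_{X ∈ B_End} (−1)^{|X||u|} X†(u) ⊗ X^∨(v) = ν·Σ_{b ∈ B_A} Σ_{w ∈ B_V} (−1)^{|w|σ + σ} Φ(u, v·b) · (w ⊗ (w^∨·b^∨)) in V ⊗_k V. -/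
/-- Parity of the `i`-th standard basis vector of `A^{m|n}`. -/
def pfin (m n : ℕ) (i : Fin (m + n)) : ZMod 2 := if (i : ℕ) < m then 0 else 1

/-- Right multiplication of a tuple by an algebra element. -/
def rmul {A : Type*} [Mul A] {ι : Type*} (v : ι → A) (a : A) : ι → A := fun i => v i * a

/-- `v ∈ A^{m|n}` is homogeneous of parity `q`. -/
def homV {k A : Type*} [Field k] [Ring A] [Algebra k A]
    (𝒜 : ZMod 2 → Submodule k A) (m n : ℕ) (q : ZMod 2) (v : Fin (m + n) → A) : Prop :=
  ∀ i, v i ∈ 𝒜 (q + pfin m n i)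

/-- The `k`-subspace of right `A`-linear endomorphisms of `A^{m|n}`. -/
def EndA (k A : Type*) [Field k] [Ring A] [Algebra k A] (m n : ℕ) :
    Submodule k ((Fin (m + n) → A) →ₗ[k] (Fin (m + n) → A)) where
  carrier := {X | ∀ (v : Fin (m + n) → A) (a : A), X (rmul v a) = rmul (X v) a}
  add_mem' := by
    intro X Y hX hY v a
    funext i
    simp [LinearMap.add_apply, hX v a, hY v a, rmul, add_mul]
  zero_mem' := by
    intro v a
    funext i
    simp [rmul]
  smul_mem' := by
    intro c X hX v a
    funext i
    simp [LinearMap.smul_apply, hX v a, rmul, smul_mul_assoc]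

/-- An endomorphism of `A^{m|n}` is homogeneous of parity `q`. -/
def homEnd {k A : Type*} [Field k] [Ring A] [Algebra k A]
    (𝒜 : ZMod 2 → Submodule k A) (m n : ℕ) (q : ZMod 2)
    (X : (Fin (m + n) → A) →ₗ[k] (Fin (m + n) → A)) : Prop :=
  ∀ (p : ZMod 2) (v : Fin (m + n) → A), homV 𝒜 m n p v → homV 𝒜 m n (p + q) (X v)

/-- The supertrace of an endomorphism of `A^{m|n}` of parity `q`. -/
def strp {k A : Type*} [Field k] [Ring A] [Algebra k A] (m n : ℕ) (q : ZMod 2)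
    (X : (Fin (m + n) → A) →ₗ[k] (Fin (m + n) → A)) : A :=
  (∑ i ∈ Finset.univ.filter (fun i : Fin (m + n) => (i : ℕ) < m), X (Pi.single i 1) i)
    - (-1 : k) ^ q.val •
      ∑ i ∈ Finset.univ.filter (fun i : Fin (m + n) => ¬ (i : ℕ) < m), X (Pi.single i 1) i

open scoped TensorProduct

/-!
Expand `X†(u)` in the basis `B_V` using its `Φ`-dual basis. By supersymmetry of `Φ` and
adjointness, the coefficient `Φ(w^∨, X†(u))` is `±ν Φ(u, X(w^∨))`, so contracting the first tensor
factor of the Ω-swap identity at `(w^∨, v)` against `Φ(u, -)` turns `Σ_X ± Φ(u, X(w^∨)) X^∨(v)`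
into `Σ_b ± Φ(u, v·b) (w^∨·b^∨)`. The accumulated sign is `(-1)^{|w^∨|(|u|+|v|+|b|)}`; since
`Φ(u, v·b)` vanishes unless `|u|+|v|+|b| = σ` and `w^∨` has parity `|w|+σ`, it equals
`(-1)^{|w|σ+σ}`.
-/

section Signs
variable {R : Type*} [Ring R]

lemma neg_one_pow_zmod_two_val_mul (a b : ZMod 2) :
    (-1 : R) ^ (a.val * b.val) = (-1) ^ (a * b).val := by
  rw [ZMod.val_mul, ← neg_one_pow_eq_pow_mod_two]

lemma neg_one_pow_zmod_two_val_add (a b : ZMod 2) :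
    (-1 : R) ^ (a + b).val = (-1) ^ a.val * (-1) ^ b.val := by
  rw [ZMod.val_add, ← neg_one_pow_eq_pow_mod_two, pow_add]

end Signs

lemma ZMod.sum_univ_two_eq_add {M : Type*} [AddCommMonoid M] (f : ZMod 2 → M) (q : ZMod 2) :
    ∑ i, f i = f q + f (q + 1) := by
  fin_cases q
  · exact Fin.sum_univ_two f
  · exact (Fin.sum_univ_two f).trans (add_comm _ _)

lemma DirectSum.decompose_add_decompose_add_one {M σ : Type*} [AddCommMonoid M] [SetLike σ M]
    [AddSubmonoidClass σ M] (ℳ : ZMod 2 → σ) [DirectSum.Decomposition ℳ] (x : M) (q : ZMod 2) :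
    (DirectSum.decompose ℳ x q : M) + DirectSum.decompose ℳ x (q + 1) = x := by
  conv_rhs => rw [← (DirectSum.decompose ℳ).symm_apply_apply x,
    ← DirectSum.sum_univ_of (DirectSum.decompose ℳ x)]
  rw [DirectSum.decompose_symm_sum, ZMod.sum_univ_two_eq_add _ q]
  simp only [DirectSum.decompose_symm_of]

lemma sum_apply_dual_smul {k M N ι : Type*} [CommSemiring k] [AddCommMonoid M] [Module k M]
    [AddCommMonoid N] [Module k N] [Fintype ι] [DecidableEq ι] (Φ : N →ₗ[k] M →ₗ[k] k)
    {w : ι → M} {wd : ι → N} (hspan : Submodule.span k (Set.range w) = ⊤)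
    (hdual : ∀ i j, Φ (wd i) (w j) = if i = j then 1 else 0) (x : M) :
    ∑ i, Φ (wd i) x • w i = x := by
  obtain ⟨c, rfl⟩ :=
    (Submodule.mem_span_range_iff_exists_fun k).mp (hspan ▸ Submodule.mem_top : x ∈ _)
  simp [map_sum, hdual]

section GradedTuples

variable {k A : Type*} [Field k] [Ring A] [Algebra k A] {𝒜 : ZMod 2 → Submodule k A} {m n : ℕ}

lemma homV_rmul [SetLike.GradedMonoid 𝒜] {p r : ZMod 2} {x : Fin (m + n) → A} {a : A}
    (hx : homV 𝒜 m n p x) (ha : a ∈ 𝒜 r) : homV 𝒜 m n (p + r) (rmul x a) := fun i => by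
  simpa only [rmul, add_right_comm] using SetLike.mul_mem_graded (hx i) ha

lemma exists_homV_add_homV [DirectSum.Decomposition 𝒜] (q : ZMod 2) (x : Fin (m + n) → A) :
    ∃ y z, homV 𝒜 m n q y ∧ homV 𝒜 m n (q + 1) z ∧ y + z = x := by
  refine ⟨fun i => DirectSum.decompose 𝒜 (x i) (q + pfin m n i),
    fun i => DirectSum.decompose 𝒜 (x i) (q + pfin m n i + 1),
    fun i => SetLike.coe_mem _, fun i => ?_,
    funext fun i => DirectSum.decompose_add_decompose_add_one 𝒜 (x i) _⟩
  simpa only [add_right_comm] using SetLike.coe_mem _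

lemma homV_dual [DirectSum.Decomposition 𝒜] {σ : ZMod 2}
    {Φ : (Fin (m + n) → A) →ₗ[k] (Fin (m + n) → A) →ₗ[k] k}
    (hΦpar : ∀ (p q : ZMod 2) u v, homV 𝒜 m n p u → homV 𝒜 m n q v → p + q ≠ σ → Φ u v = 0)
    (hΦnd : ∀ u, (∀ v, Φ u v = 0) → u = 0)
    {ι : Type*} [DecidableEq ι] {w wd : ι → Fin (m + n) → A} {p : ι → ZMod 2}
    (hw : ∀ i, homV 𝒜 m n (p i) (w i)) (hspan : Submodule.span k (Set.range w) = ⊤)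
    (hdual : ∀ i j, Φ (wd i) (w j) = if i = j then 1 else 0) (i : ι) :
    homV 𝒜 m n (p i + σ) (wd i) := by
  obtain ⟨y, z, hy, hz, hyz⟩ := exists_homV_add_homV (𝒜 := 𝒜) (p i + σ) (wd i)
  suffices hΦz : Φ z = 0 by
    rwa [← hyz, hΦnd z fun v => by rw [hΦz, LinearMap.zero_apply], add_zero]
  refine LinearMap.ext_on_range hspan fun j => ?_
  by_cases hj : p i + σ + 1 + p j = σ
  · have hji : i ≠ j := by rintro rfl; grind
    have hy0 : Φ y (w j) = 0 := hΦpar _ _ _ _ hy (hw j) (by grind)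
    have hdual_ij := hdual i j
    rw [if_neg hji, ← hyz, map_add, LinearMap.add_apply, hy0, zero_add] at hdual_ij
    exact hdual_ij
  · exact hΦpar _ _ _ _ hz (hw j) hj

lemma neg_one_pow_mul_apply_dag {ν : k} {Φ : (Fin (m + n) → A) →ₗ[k] (Fin (m + n) → A) →ₗ[k] k}
    (hΦsymm : ∀ (p q : ZMod 2) u v, homV 𝒜 m n p u → homV 𝒜 m n q v →
      Φ u v = ν * (-1 : k) ^ (p.val * q.val) * Φ v u)
    {dag : ((Fin (m + n) → A) →ₗ[k] (Fin (m + n) → A)) →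
      ((Fin (m + n) → A) →ₗ[k] (Fin (m + n) → A))}
    (hdag_hom : ∀ (p : ZMod 2) X, homEnd 𝒜 m n p X → homEnd 𝒜 m n p (dag X))
    (hdag_adj : ∀ (p : ZMod 2) X, X ∈ EndA k A m n → homEnd 𝒜 m n p X →
      ∀ (q : ZMod 2) v, homV 𝒜 m n q v → ∀ w,
        Φ v (X w) = (-1 : k) ^ (p.val * q.val) * Φ (dag X v) w)
    {p px pu : ZMod 2} {X : (Fin (m + n) → A) →ₗ[k] (Fin (m + n) → A)} {x u : Fin (m + n) → A}
    (hXA : X ∈ EndA k A m n) (hX : homEnd 𝒜 m n p X) (hx : homV 𝒜 m n px x)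
    (hu : homV 𝒜 m n pu u) :
    (-1 : k) ^ (p.val * pu.val) * Φ x (dag X u) = ν * (-1) ^ (px * (pu + p)).val * Φ u (X x) := by
  rw [hΦsymm px (pu + p) x (dag X u) hx (hdag_hom p X hX pu u hu),
    hdag_adj p X hXA hX pu u hu x, neg_one_pow_zmod_two_val_mul px]
  ring

lemma sum_neg_one_pow_mul_apply_dag_smul_tmul {ν : k}
    {Φ : (Fin (m + n) → A) →ₗ[k] (Fin (m + n) → A) →ₗ[k] k}
    (hΦsymm : ∀ (p q : ZMod 2) u v, homV 𝒜 m n p u → homV 𝒜 m n q v →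
      Φ u v = ν * (-1 : k) ^ (p.val * q.val) * Φ v u)
    {dag : ((Fin (m + n) → A) →ₗ[k] (Fin (m + n) → A)) →
      ((Fin (m + n) → A) →ₗ[k] (Fin (m + n) → A))}
    (hdag_hom : ∀ (p : ZMod 2) X, homEnd 𝒜 m n p X → homEnd 𝒜 m n p (dag X))
    (hdag_adj : ∀ (p : ZMod 2) X, X ∈ EndA k A m n → homEnd 𝒜 m n p X →
      ∀ (q : ZMod 2) v, homV 𝒜 m n q v → ∀ w,
        Φ v (X w) = (-1 : k) ^ (p.val * q.val) * Φ (dag X v) w)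
    {ι ιA : Type*} [Fintype ι] [Fintype ιA]
    {XE XdE : ι → ((Fin (m + n) → A) →ₗ[k] (Fin (m + n) → A))} {pE : ι → ZMod 2}
    (hXE_A : ∀ i, XE i ∈ EndA k A m n) (hXE_hom : ∀ i, homEnd 𝒜 m n (pE i) (XE i))
    {bA dA : ιA → A} {pA : ιA → ZMod 2} {px pu pv : ZMod 2} {x u v : Fin (m + n) → A}
    (hx : homV 𝒜 m n px x) (hu : homV 𝒜 m n pu u)
    (hΩ : (∑ i, ((-1 : k) ^ ((pE i).val * px.val)) • ((XE i x) ⊗ₜ[k] (XdE i v))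
        : (Fin (m + n) → A) ⊗[k] (Fin (m + n) → A))
      = ((-1 : k) ^ (px.val * pv.val)) •
          ∑ b, ((-1 : k) ^ (px.val * (pA b).val)) • ((rmul v (bA b)) ⊗ₜ[k] (rmul x (dA b))))
    (y : Fin (m + n) → A) :
    ∑ i, ((-1 : k) ^ ((pE i).val * pu.val) * Φ x (dag (XE i) u)) • (y ⊗ₜ[k] XdE i v)
      = ∑ b, (ν * (-1) ^ (px * (pu + pv + pA b)).val * Φ u (rmul v (bA b))) •
          (y ⊗ₜ[k] rmul x (dA b)) := by
  -- contract the first tensor factor of the Ω-swap against `Φ u`, and put `y` in its place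
  have hcontract := congrArg (LinearMap.rTensor _ ((Φ u).smulRight y)) hΩ
  simp only [map_sum, map_smul, LinearMap.rTensor_tmul, LinearMap.smulRight_apply,
    ← TensorProduct.smul_tmul', smul_smul, Finset.smul_sum] at hcontract
  calc ∑ i, ((-1 : k) ^ ((pE i).val * pu.val) * Φ x (dag (XE i) u)) • (y ⊗ₜ[k] XdE i v)
      = (ν * (-1) ^ (px * pu).val) •
          ∑ i, ((-1 : k) ^ ((pE i).val * px.val) * Φ u (XE i x)) • (y ⊗ₜ[k] XdE i v) := by
        rw [Finset.smul_sum]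
        refine Finset.sum_congr rfl fun i _ => ?_
        rw [smul_smul, neg_one_pow_mul_apply_dag hΦsymm hdag_hom hdag_adj (hXE_A i) (hXE_hom i)
          hx hu, mul_add, neg_one_pow_zmod_two_val_add, ← neg_one_pow_zmod_two_val_mul px (pE i),
          mul_comm px.val]
        congr 1
        ring
    _ = _ := by
        rw [hcontract, Finset.smul_sum]
        refine Finset.sum_congr rfl fun b _ => ?_
        rw [smul_smul, mul_add, mul_add, neg_one_pow_zmod_two_val_add,
          neg_one_pow_zmod_two_val_add, ← neg_one_pow_zmod_two_val_mul px pv,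
          ← neg_one_pow_zmod_two_val_mul px (pA b)]
        congr 1
        ring

lemma neg_one_pow_mul_apply_rmul [SetLike.GradedMonoid 𝒜] {σ : ZMod 2}
    {Φ : (Fin (m + n) → A) →ₗ[k] (Fin (m + n) → A) →ₗ[k] k}
    (hΦpar : ∀ (p q : ZMod 2) u v, homV 𝒜 m n p u → homV 𝒜 m n q v → p + q ≠ σ → Φ u v = 0)
    {pu pv r : ZMod 2} {u v : Fin (m + n) → A} {a : A}
    (hu : homV 𝒜 m n pu u) (hv : homV 𝒜 m n pv v) (ha : a ∈ 𝒜 r) (q : ZMod 2) :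
    (-1 : k) ^ ((q + σ) * (pu + pv + r)).val * Φ u (rmul v a)
      = (-1) ^ (q.val * σ.val + σ.val) * Φ u (rmul v a) := by
  by_cases h : pu + pv + r = σ
  · rw [h, add_mul, ← sq σ, ZMod.pow_card, neg_one_pow_zmod_two_val_add,
      ← neg_one_pow_zmod_two_val_mul, pow_add]
  · rw [hΦpar pu (pv + r) u _ hu (homV_rmul hv ha) (by rwa [← add_assoc]), mul_zero, mul_zero]

end GradedTuples

theorem stmt14_general (k : Type*) [Field k]
    (A : Type*) [Ring A] [Algebra k A]
    (𝒜 : ZMod 2 → Submodule k A) [GradedAlgebra 𝒜]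
    (ιA : Type*) [Fintype ιA]
    (bA : Module.Basis ιA k A) (pA : ιA → ZMod 2) (hbA : ∀ i, bA i ∈ 𝒜 (pA i))
    (dA : ιA → A)
    (m n : ℕ)
    (ι : Type*) [Fintype ι]
    (XE XdE : ι → ((Fin (m + n) → A) →ₗ[k] (Fin (m + n) → A)))
    (pE : ι → ZMod 2)
    (hXE_A : ∀ i, XE i ∈ EndA k A m n)
    (hXE_hom : ∀ i, homEnd 𝒜 m n (pE i) (XE i))
    -- the form Φ
    (σp : ZMod 2) (ν : k)
    (Φ : (Fin (m + n) → A) →ₗ[k] (Fin (m + n) → A) →ₗ[k] k)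
    (hΦpar : ∀ (p q : ZMod 2) u v, homV 𝒜 m n p u → homV 𝒜 m n q v →
      p + q ≠ σp → Φ u v = 0)
    (hΦnd : ∀ u, (∀ v, Φ u v = 0) → u = 0)
    (hΦsymm : ∀ (p q : ZMod 2) u v, homV 𝒜 m n p u → homV 𝒜 m n q v →
      Φ u v = ν * (-1 : k) ^ (p.val * q.val) * Φ v u)
    -- the homogeneous basis B_V of V and its left dual basis with respect to Φ
    (ιV : Type*) [Fintype ιV] [DecidableEq ιV]
    (wV : ιV → (Fin (m + n) → A)) (pV : ιV → ZMod 2)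
    (hwV_hom : ∀ i, homV 𝒜 m n (pV i) (wV i))
    (hwV_span : Submodule.span k (Set.range wV) = ⊤)
    (wd : ιV → (Fin (m + n) → A))
    (hdualV : ∀ i j, Φ (wd i) (wV j) = if i = j then (1 : k) else 0)
    -- the adjoint map †
    (dag : ((Fin (m + n) → A) →ₗ[k] (Fin (m + n) → A)) →ₗ[k]
      ((Fin (m + n) → A) →ₗ[k] (Fin (m + n) → A)))
    (hdag_hom : ∀ (p : ZMod 2) X, homEnd 𝒜 m n p X → homEnd 𝒜 m n p (dag X))
    (hdag_adj : ∀ (p : ZMod 2) X, X ∈ EndA k A m n → homEnd 𝒜 m n p X →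
      ∀ (q : ZMod 2) v, homV 𝒜 m n q v → ∀ w,
        Φ v (X w) = (-1 : k) ^ (p.val * q.val) * Φ (dag X v) w)
    -- the Ω-swap identity
    (hΩ : ∀ (pu pv : ZMod 2) (u v : Fin (m + n) → A),
      homV 𝒜 m n pu u → homV 𝒜 m n pv v →
      (∑ i, ((-1 : k) ^ ((pE i).val * pu.val)) • ((XE i u) ⊗ₜ[k] (XdE i v))
        : (Fin (m + n) → A) ⊗[k] (Fin (m + n) → A))
      = ((-1 : k) ^ (pu.val * pv.val)) •
          ∑ b, ((-1 : k) ^ (pu.val * (pA b).val)) •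
            ((rmul v (bA b)) ⊗ₜ[k] (rmul u (dA b)))) :
    ∀ (pu pv : ZMod 2) (u v : Fin (m + n) → A),
      homV 𝒜 m n pu u → homV 𝒜 m n pv v →
      (∑ i, ((-1 : k) ^ ((pE i).val * pu.val)) • ((dag (XE i) u) ⊗ₜ[k] (XdE i v))
        : (Fin (m + n) → A) ⊗[k] (Fin (m + n) → A))
      = ν • ∑ b, ∑ w,
          (((-1 : k) ^ ((pV w).val * σp.val + σp.val)) * Φ u (rmul v (bA b))) •
            ((wV w) ⊗ₜ[k] (rmul (wd w) (dA b))) := by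
  intro pu pv u v hu hv
  have hwd := homV_dual hΦpar hΦnd hwV_hom hwV_span hdualV
  calc (∑ i, ((-1 : k) ^ ((pE i).val * pu.val)) • ((dag (XE i) u) ⊗ₜ[k] (XdE i v))
        : (Fin (m + n) → A) ⊗[k] (Fin (m + n) → A))
      = ∑ w, ∑ i, ((-1 : k) ^ ((pE i).val * pu.val) * Φ (wd w) (dag (XE i) u)) •
          (wV w ⊗ₜ[k] XdE i v) := by
        rw [Finset.sum_comm]
        refine Finset.sum_congr rfl fun i _ => ?_
        conv_lhs => rw [← sum_apply_dual_smul Φ hwV_span hdualV (dag (XE i) u)]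
        simp only [TensorProduct.sum_tmul, Finset.smul_sum, TensorProduct.smul_tmul', smul_smul]
    _ = ∑ w, ∑ b, (ν * (-1) ^ ((pV w + σp) * (pu + pv + pA b)).val * Φ u (rmul v (bA b))) •
          (wV w ⊗ₜ[k] rmul (wd w) (dA b)) :=
        Finset.sum_congr rfl fun w _ => sum_neg_one_pow_mul_apply_dag_smul_tmul hΦsymm hdag_hom
          hdag_adj hXE_A hXE_hom (hwd w) hu (hΩ _ _ _ _ (hwd w) hv) (wV w)
    _ = _ := by
        rw [Finset.sum_comm, Finset.smul_sum]
        refine Finset.sum_congr rfl fun b _ => ?_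
        rw [Finset.smul_sum]
        refine Finset.sum_congr rfl fun w _ => ?_
        rw [smul_smul, mul_assoc, neg_one_pow_mul_apply_rmul hΦpar hu hv (hbA b)]

/-- With `V = A^{m|n}`, a nondegenerate `(ν,⋆)`-supersymmetric form `Φ` of parity
`σ`, the adjoint map `†`, and dual homogeneous bases of `End_A(V)` and of `V`, for homogeneous
`u, v ∈ V`:
`Σ_{X ∈ B_End} (−1)^{|X||u|} X†(u) ⊗ X^∨(v)
  = ν Σ_{b ∈ B_A} Σ_{w ∈ B_V} (−1)^{|w|σ+σ} Φ(u, v·b) (w ⊗ (w^∨·b^∨))` in `V ⊗_k V`. -/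
theorem stmt14 (k : Type*) [Field k] (hchar : (2 : k) ≠ 0)
    (A : Type*) [Ring A] [Algebra k A] [FiniteDimensional k A]
    (𝒜 : ZMod 2 → Submodule k A) [GradedAlgebra 𝒜]
    (tr : A →ₗ[k] k)
    (heven : ∀ a ∈ 𝒜 1, tr a = 0)
    (hnd : ∀ x : A, (∀ y : A, tr (x * y) = 0) → x = 0)
    (hsymm : ∀ (p q : ZMod 2), ∀ x ∈ 𝒜 p, ∀ y ∈ 𝒜 q,
      tr (x * y) = (-1 : k) ^ (p.val * q.val) * tr (y * x))
    (st : A →ₗ[k] A)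
    (hst_invol : ∀ a, st (st a) = a)
    (hst_grade : ∀ (p : ZMod 2), ∀ a ∈ 𝒜 p, st a ∈ 𝒜 p)
    (hst_mul : ∀ (p q : ZMod 2), ∀ x ∈ 𝒜 p, ∀ y ∈ 𝒜 q,
      st (x * y) = ((-1 : k) ^ (p.val * q.val)) • (st y * st x))
    (hst_tr : ∀ a, tr (st a) = tr a)
    (ιA : Type*) [Fintype ιA] [DecidableEq ιA]
    (bA : Module.Basis ιA k A) (pA : ιA → ZMod 2) (hbA : ∀ i, bA i ∈ 𝒜 (pA i))
    (dA : ιA → A) (hdA : ∀ i, dA i ∈ 𝒜 (pA i))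
    (hdualA : ∀ i j, tr (dA i * bA j) = if i = j then (1 : k) else 0)
    (m n : ℕ)
    (ι : Type*) [Fintype ι] [DecidableEq ι]
    (XE XdE : ι → ((Fin (m + n) → A) →ₗ[k] (Fin (m + n) → A)))
    (pE : ι → ZMod 2)
    (hXE_A : ∀ i, XE i ∈ EndA k A m n) (hXdE_A : ∀ i, XdE i ∈ EndA k A m n)
    (hXE_hom : ∀ i, homEnd 𝒜 m n (pE i) (XE i))
    (hXdE_hom : ∀ i, homEnd 𝒜 m n (pE i) (XdE i))
    (hXE_li : LinearIndependent k XE)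
    (hXE_span : Submodule.span k (Set.range XE) = EndA k A m n)
    (hndE : ∀ (p : ZMod 2) X, X ∈ EndA k A m n → homEnd 𝒜 m n p X →
      (∀ (q : ZMod 2) Y, Y ∈ EndA k A m n → homEnd 𝒜 m n q Y →
        tr (strp m n (p + q) (X ∘ₗ Y)) = 0) → X = 0)
    (hdualE : ∀ i j, tr (strp m n (pE i + pE j) (XdE i ∘ₗ XE j))
      = if i = j then (1 : k) else 0)
    -- the form Φ
    (σp : ZMod 2) (ν : k) (hν : ν = 1 ∨ ν = -1)
    (Φ : (Fin (m + n) → A) →ₗ[k] (Fin (m + n) → A) →ₗ[k] k)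
    (hΦpar : ∀ (p q : ZMod 2) u v, homV 𝒜 m n p u → homV 𝒜 m n q v →
      p + q ≠ σp → Φ u v = 0)
    (hΦnd : ∀ u, (∀ v, Φ u v = 0) → u = 0)
    (hΦsymm : ∀ (p q : ZMod 2) u v, homV 𝒜 m n p u → homV 𝒜 m n q v →
      Φ u v = ν * (-1 : k) ^ (p.val * q.val) * Φ v u)
    (hΦsesq : ∀ (p q r : ZMod 2) u v, ∀ a ∈ 𝒜 r, homV 𝒜 m n p u → homV 𝒜 m n q v →
      Φ (rmul u a) v = (-1 : k) ^ (r.val * q.val) * Φ u (rmul v (st a)))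
    -- the homogeneous basis B_V of V and its left dual basis with respect to Φ
    (ιV : Type*) [Fintype ιV] [DecidableEq ιV]
    (wV : ιV → (Fin (m + n) → A)) (pV : ιV → ZMod 2)
    (hwV_hom : ∀ i, homV 𝒜 m n (pV i) (wV i))
    (hwV_li : LinearIndependent k wV)
    (hwV_span : Submodule.span k (Set.range wV) = ⊤)
    (wd : ιV → (Fin (m + n) → A))
    (hdualV : ∀ i j, Φ (wd i) (wV j) = if i = j then (1 : k) else 0)
    -- the adjoint map †
    (dag : ((Fin (m + n) → A) →ₗ[k] (Fin (m + n) → A)) →ₗ[k]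
      ((Fin (m + n) → A) →ₗ[k] (Fin (m + n) → A)))
    (hdag_A : ∀ X ∈ EndA k A m n, dag X ∈ EndA k A m n)
    (hdag_hom : ∀ (p : ZMod 2) X, homEnd 𝒜 m n p X → homEnd 𝒜 m n p (dag X))
    (hdag_adj : ∀ (p : ZMod 2) X, X ∈ EndA k A m n → homEnd 𝒜 m n p X →
      ∀ (q : ZMod 2) v, homV 𝒜 m n q v → ∀ w,
        Φ v (X w) = (-1 : k) ^ (p.val * q.val) * Φ (dag X v) w)
    -- the Ω-swap identity
    (hΩ : ∀ (pu pv : ZMod 2) (u v : Fin (m + n) → A),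
      homV 𝒜 m n pu u → homV 𝒜 m n pv v →
      (∑ i, ((-1 : k) ^ ((pE i).val * pu.val)) • ((XE i u) ⊗ₜ[k] (XdE i v))
        : (Fin (m + n) → A) ⊗[k] (Fin (m + n) → A))
      = ((-1 : k) ^ (pu.val * pv.val)) •
          ∑ b, ((-1 : k) ^ (pu.val * (pA b).val)) •
            ((rmul v (bA b)) ⊗ₜ[k] (rmul u (dA b)))) :
    ∀ (pu pv : ZMod 2) (u v : Fin (m + n) → A),
      homV 𝒜 m n pu u → homV 𝒜 m n pv v →
      (∑ i, ((-1 : k) ^ ((pE i).val * pu.val)) • ((dag (XE i) u) ⊗ₜ[k] (XdE i v))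
        : (Fin (m + n) → A) ⊗[k] (Fin (m + n) → A))
      = ν • ∑ b, ∑ w,
          (((-1 : k) ^ ((pV w).val * σp.val + σp.val)) * Φ u (rmul v (bA b))) •
            ((wV w) ⊗ₜ[k] (rmul (wd w) (dA b))) :=
  stmt14_general k A 𝒜 ιA bA pA hbA dA m n ι XE XdE pE hXE_A hXE_hom σp ν Φ hΦpar hΦnd hΦsymm ιV wV
    pV hwV_hom hwV_span wd hdualV dag hdag_hom hdag_adj hΩ
end
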